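/- arXiv:0707.1899 — 6 statements merged into one kernel-verified Lean document; each statement's English description precedes it below -/
import Mathlib

section
/- Let (W,S) be an even Coxeter system, t ∈ S, and suppose s ∈ S shortens an element w ∈ W by left multiplication, i.e. ℓ(sw) < ℓ(w) with w = s₁⋯s_k reduced. Then the index i provided by the Exchange Condition (so that sw = s₁⋯ŝᵢ⋯s_k) satisfies sᵢ = s. -/
open CoxeterSystem

/-- An even Coxeter system: every off-diagonal entry of the Coxeter matrix is
even or infinite (where `0` encodes `∞`). -/
def CoxeterMatrix.IsEven {B : Type*} (M : CoxeterMatrix B) : Prop :=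
  ∀ i j : B, i ≠ j → M i j = 0 ∨ Even (M i j)

/-- The standard parabolic subgroup `W_V` generated by the simple reflections
indexed by `V`. -/
def CoxeterSystem.parabolic {B W : Type*} [Group W] {M : CoxeterMatrix B}
    (cs : CoxeterSystem M W) (V : Set B) : Subgroup W :=
  Subgroup.closure (cs.simple '' V)

/-- `V ⊆ S` is spherical if the parabolic subgroup `W_V` is finite. -/
def CoxeterSystem.IsSpherical {B W : Type*} [Group W] {M : CoxeterMatrix B}
    (cs : CoxeterSystem M W) (V : Set B) : Prop :=
  (cs.parabolic V : Set W).Finite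

/-- `S(w)`: the set of generators appearing in a reduced expression for `w`. -/
def CoxeterSystem.lettersOf {B W : Type*} [Group W] {M : CoxeterMatrix B}
    (cs : CoxeterSystem M W) (w : W) : Set B :=
  {i | ∃ ω : List B, cs.IsReduced ω ∧ cs.wordProd ω = w ∧ i ∈ ω}

/-- The nerve of the Coxeter system is a flag complex: any finite set of
pairwise spherical vertices is spherical. -/
def CoxeterSystem.HasFlagNerve {B W : Type*} [Group W] {M : CoxeterMatrix B}
    (cs : CoxeterSystem M W) : Prop :=
  ∀ T : Finset B, (∀ i ∈ T, ∀ j ∈ T, i ≠ j → cs.IsSpherical {i, j}) →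
    cs.IsSpherical (T : Set B)

theorem CoxeterMatrix.IsEven.isLiftable_sign {B : Type*} [DecidableEq B] {M : CoxeterMatrix B}
    (heven : M.IsEven) (s : B) :
    M.IsLiftable (fun b => if b = s then (-1 : ℤˣ) else 1) := by
  intro j j'
  rcases eq_or_ne j j' with rfl | hne
  · rw [M.diagonal j, pow_one]
    exact Int.units_mul_self _
  · rcases heven j j' hne with h0 | ⟨k, hk⟩
    · rw [h0, pow_zero]
    · rw [hk, pow_add]
      exact Int.units_mul_self _

namespace CoxeterSystem

variable {B W : Type*} [Group W] {M : CoxeterMatrix B} (cs : CoxeterSystem M W)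

theorem map_simple_mul_map_wordProd_eraseIdx {G : Type*} [CommGroup G] (φ : W →* G)
    (ω : List B) (i : Fin ω.length) :
    φ (cs.simple (ω.get i)) * φ (cs.wordProd (ω.eraseIdx i)) = φ (cs.wordProd ω) := by
  simp only [wordProd, map_list_prod, List.map_map, ← List.eraseIdx_map]
  simpa using List.CommMonoid.mul_prod_eraseIdx (l := ω.map (φ ∘ cs.simple)) (i := i) (by simp)

/-- `(-1)` to the number of occurrences of `s` in any word for the element: since `M` is even,
the braid relations preserve the parity of that number. -/
def letterSign [DecidableEq B] (heven : M.IsEven) (s : B) : W →* ℤˣ :=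
  cs.lift ⟨_, heven.isLiftable_sign s⟩

theorem letterSign_simple [DecidableEq B] (heven : M.IsEven) (s b : B) :
    cs.letterSign heven s (cs.simple b) = if b = s then -1 else 1 :=
  cs.lift_apply_simple _ b

end CoxeterSystem

theorem statement2_general {B W : Type*} [Group W] {M : CoxeterMatrix B}
    (cs : CoxeterSystem M W) (heven : M.IsEven) (s : B) (ω : List B)
    (i : Fin ω.length)
    (hi : cs.simple s * cs.wordProd ω = cs.wordProd (ω.eraseIdx i)) :
    ω.get i = s := by
  classical
  set χ := cs.letterSign heven s
  have h := cs.map_simple_mul_map_wordProd_eraseIdx χ ω i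
  rw [← hi, map_mul, mul_left_comm, ← mul_assoc, mul_eq_right] at h
  by_contra hne
  rw [cs.letterSign_simple, cs.letterSign_simple, if_neg hne, if_pos rfl] at h
  exact absurd h (by decide)

/-- in an even Coxeter system, if `s` shortens `w` then the letter
deleted by the Exchange Condition is `s` itself. -/
theorem statement2 {B W : Type*} [Group W] {M : CoxeterMatrix B}
    (cs : CoxeterSystem M W) (heven : M.IsEven) (s : B) (ω : List B)
    (hred : cs.IsReduced ω)
    (hshort : cs.length (cs.simple s * cs.wordProd ω) < cs.length (cs.wordProd ω))
    (i : Fin ω.length)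
    (hi : cs.simple s * cs.wordProd ω = cs.wordProd (ω.eraseIdx i)) :
    ω.get i = s :=
  statement2_general cs heven s ω i hi
end

section
/- Let (W,S) be an even Coxeter system whose nerve L is a flag simplicial complex, let t ∈ S, and let S' = { s ∈ S : 2 < m_{st} < ∞ }. Then for s, s' ∈ S', either s = s' or m_{ss'} = ∞. -/
open CoxeterSystem

/-! ### Auxiliary matrix lemmas: an explicit representation of rank-3 even
triangle-type Coxeter groups with an infinite-order element. -/

noncomputable section AuxMatStatement5

open Real Matrix Complex

private def matA (u : ℝ) : Matrix (Fin 3) (Fin 3) ℂ := !![-1, 0, 2*u; 0, 1, 0; 0, 0, 1]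
private def matB (v : ℝ) : Matrix (Fin 3) (Fin 3) ℂ := !![1, 0, 0; 0, -1, 2*v; 0, 0, 1]
private def matC (u v : ℝ) : Matrix (Fin 3) (Fin 3) ℂ :=
  !![1, 0, 0; 0, 1, 0; 2*u, 2*v, -1]
private def matS : Matrix (Fin 3) (Fin 3) ℂ := !![0, 1, 0; 1, 0, 0; 0, 0, 1]

private lemma matA_sq (u : ℝ) : matA u * matA u = 1 := by
  ext i j
  fin_cases i <;> fin_cases j <;>
    simp [matA, Matrix.mul_apply, Fin.sum_univ_three, Matrix.one_apply,
      Matrix.vecHead, Matrix.vecTail] <;> ring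

private lemma matB_sq (v : ℝ) : matB v * matB v = 1 := by
  ext i j
  fin_cases i <;> fin_cases j <;>
    simp [matB, Matrix.mul_apply, Fin.sum_univ_three, Matrix.one_apply,
      Matrix.vecHead, Matrix.vecTail] <;> ring

private lemma matC_sq (u v : ℝ) : matC u v * matC u v = 1 := by
  ext i j
  fin_cases i <;> fin_cases j <;>
    simp [matC, Matrix.mul_apply, Fin.sum_univ_three, Matrix.one_apply,
      Matrix.vecHead, Matrix.vecTail] <;> ring

private lemma matS_sq : matS * matS = 1 := by
  ext i j
  fin_cases i <;> fin_cases j <;>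
    simp [matS, Matrix.mul_apply, Fin.sum_univ_three, Matrix.one_apply,
      Matrix.vecHead, Matrix.vecTail]

private lemma matAB_sq (u v : ℝ) : (matA u * matB v) * (matA u * matB v) = 1 := by
  ext i j
  fin_cases i <;> fin_cases j <;>
    simp [matA, matB, Matrix.mul_apply, Fin.sum_univ_three, Matrix.one_apply,
      Matrix.vecHead, Matrix.vecTail] <;> ring

private lemma matBA_sq (u v : ℝ) : (matB v * matA u) * (matB v * matA u) = 1 := by
  ext i j
  fin_cases i <;> fin_cases j <;>
    simp [matA, matB, Matrix.mul_apply, Fin.sum_univ_three, Matrix.one_apply,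
      Matrix.vecHead, Matrix.vecTail] <;> ring

private lemma matB_conj (v : ℝ) : matB v = matS * matA v * matS := by
  ext i j
  fin_cases i <;> fin_cases j <;>
    simp [matA, matB, matS, Matrix.mul_apply, Fin.sum_univ_three,
      Matrix.vecHead, Matrix.vecTail] <;> ring

private lemma matC_conj (u v : ℝ) : matC u v = matS * matC v u * matS := by
  ext i j
  fin_cases i <;> fin_cases j <;>
    simp [matC, matS, Matrix.mul_apply, Fin.sum_univ_three,
      Matrix.vecHead, Matrix.vecTail] <;> ring

private lemma conj_pow_eq {R : Type*} [Monoid R] {X P D : R} (h : X * P = P * D) (n : ℕ) :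
    X ^ n * P = P * D ^ n := by
  induction n with
  | zero => simp
  | succ n ih => rw [pow_succ', pow_succ', mul_assoc, ih, ← mul_assoc, h, mul_assoc]

private lemma sandwich_pow {R : Type*} [Monoid R] {S Y : R} (hS : S * S = 1) (n : ℕ) :
    (S * Y * S) ^ n = S * Y ^ n * S := by
  induction n with
  | zero => simpa using hS.symm
  | succ n ih =>
    have hSS : ∀ X : R, S * (S * X) = X := fun X => by rw [← mul_assoc, hS, one_mul]
    rw [pow_succ, ih, pow_succ]
    simp only [mul_assoc, hSS]

private lemma cos_pos_aux (q : ℕ) (hq : 3 ≤ q) : 0 < Real.cos (π / q) := by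
  have hq0 : (0:ℝ) < q := by positivity
  apply Real.cos_pos_of_mem_Ioo
  rw [Set.mem_Ioo]
  constructor
  · have : (0:ℝ) < π / q := by positivity
    linarith [Real.pi_pos]
  · have h3 : π / q ≤ π / 3 := by
      apply div_le_div_of_nonneg_left Real.pi_pos.le (by norm_num)
      exact_mod_cast hq
    have : π / 3 < π / 2 := by
      apply div_lt_div_of_pos_left Real.pi_pos (by norm_num) (by norm_num)
    linarith

private lemma key_rot (q : ℕ) (hq : 3 ≤ q) (v : ℝ) :
    (matA (Real.cos (π / q)) * matC (Real.cos (π / q)) v) ^ q = 1 := by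
  have hq0 : (q : ℝ) ≠ 0 := by positivity
  set u : ℝ := Real.cos (π / q) with hu
  set l1 : ℂ := Complex.exp ((2 * π / q : ℝ) * Complex.I) with hl1
  set l2 : ℂ := Complex.exp (-((2 * π / q : ℝ) * Complex.I)) with hl2
  have hprod : l1 * l2 = 1 := by
    rw [hl1, hl2, ← Complex.exp_add, add_neg_cancel, Complex.exp_zero]
  have hsum : l1 + l2 = 4 * (u:ℂ)^2 - 2 := by
    have h1 : l1 + l2 = 2 * Complex.cos ((2 * π / q : ℝ)) := by
      rw [hl1, hl2, Complex.cos, mul_comm]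
      push_cast
      ring
    rw [h1, ← Complex.ofReal_cos]
    have h2 : (2 * π / q : ℝ) = 2 * (π / q) := by ring
    rw [h2, Real.cos_two_mul, ← hu]
    push_cast
    ring
  have hl1q : l1 ^ q = 1 := by
    rw [hl1, ← Complex.exp_nat_mul]
    have hqC : (q : ℂ) ≠ 0 := by exact_mod_cast hq0
    have : (q : ℂ) * (((2 * π / q : ℝ) : ℂ) * Complex.I) = 2 * π * Complex.I := by
      push_cast
      field_simp
    rw [this, Complex.exp_two_pi_mul_I]
  have hl2q : l2 ^ q = 1 := by
    have := congrArg (· ^ q) hprod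
    simpa [mul_pow, hl1q] using this
  have hl12 : l1 ≠ l2 := by
    intro h
    have hsq : l1 ^ 2 = 1 := by rw [pow_two]; nth_rw 2 [h]; exact hprod
    rw [hl1, ← Complex.exp_nat_mul, Complex.exp_eq_one_iff] at hsq
    obtain ⟨n, hn⟩ := hsq
    have hre : (2 : ℝ) * (2 * π / q) = n * (2 * π) := by
      have := congrArg (fun z => z.im) hn
      simpa [Complex.mul_im, Complex.mul_re] using this
    have hpi : (0:ℝ) < π := Real.pi_pos
    have : (n : ℝ) * q = 2 := by
      field_simp at hre
      nlinarith [hre]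
    have hq3 : (3:ℝ) ≤ (q:ℝ) := by exact_mod_cast hq
    rcases le_or_gt (n:ℝ) 0 with h0 | h0
    · nlinarith
    · have : (1:ℝ) ≤ (n:ℝ) := by exact_mod_cast h0
      nlinarith
  have hu0 : 0 < u := cos_pos_aux q hq
  have hu1 : u < 1 := by
    have h0 : 0 < π / q := by positivity
    have : Real.cos (π / q) < 1 := by
      calc Real.cos (π / q) < Real.cos 0 := by
            apply Real.cos_lt_cos_of_nonneg_of_le_pi le_rfl ?_ h0
            have : π / q ≤ π / 3 := by
              apply div_le_div_of_nonneg_left Real.pi_pos.le (by norm_num)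
              exact_mod_cast hq
            linarith [Real.pi_pos]
        _ = 1 := Real.cos_zero
    simpa [hu] using this
  set P : Matrix (Fin 3) (Fin 3) ℂ :=
    !![1 + l1, 1 + l2, (u:ℂ) * v; 0, 0, 1 - (u:ℂ)^2; 2*u, 2*u, (v:ℂ)] with hP
  set D : Matrix (Fin 3) (Fin 3) ℂ := Matrix.diagonal ![l1, l2, 1] with hD
  have hXP : (matA u * matC u v) * P = P * D := by
    ext i j
    fin_cases i <;> fin_cases j <;>
      simp [matA, matC, hP, hD, Matrix.mul_apply, Fin.sum_univ_three, Matrix.diagonal,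
        Matrix.vecHead, Matrix.vecTail]
    all_goals (try ring_nf)
    · linear_combination (-l1) * hsum + hprod
    · linear_combination (-l2) * hsum + hprod
  have hDq : D ^ q = 1 := by
    rw [hD, Matrix.diagonal_pow]
    have : ![l1, l2, 1] ^ q = ![1, 1, 1] := by
      funext i
      fin_cases i <;> simp [Pi.pow_apply, hl1q, hl2q]
    rw [this]
    ext i j
    fin_cases i <;> fin_cases j <;> simp [Matrix.diagonal, Matrix.one_apply]
  have hdetP : P.det = 2 * (u:ℂ) * (1 - (u:ℂ)^2) * (l2 - l1) := by
    rw [hP, Matrix.det_fin_three]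
    simp [Matrix.vecHead, Matrix.vecTail]
    ring
  have hdet : IsUnit P.det := by
    rw [hdetP]
    apply isUnit_iff_ne_zero.mpr
    apply mul_ne_zero
    apply mul_ne_zero
    apply mul_ne_zero
    · norm_num
    · exact_mod_cast (Complex.ofReal_ne_zero.mpr hu0.ne')
    · intro h
      have : (u:ℂ)^2 = 1 := by linear_combination -h
      have : (u:ℝ)^2 = 1 := by exact_mod_cast this
      nlinarith
    · exact sub_ne_zero.mpr (Ne.symm hl12)
  calc (matA u * matC u v) ^ q
      = (matA u * matC u v) ^ q * (P * P⁻¹) := by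
        rw [Matrix.mul_nonsing_inv P hdet, mul_one]
    _ = ((matA u * matC u v) ^ q * P) * P⁻¹ := by rw [mul_assoc]
    _ = (P * D ^ q) * P⁻¹ := by rw [conj_pow_eq hXP]
    _ = P * P⁻¹ := by rw [hDq, mul_one]
    _ = 1 := Matrix.mul_nonsing_inv P hdet

private lemma matG_eq (u v : ℝ) : matC u v * matA u * matB v =
    !![-1, 0, 2*(u:ℂ); 0, -1, 2*(v:ℂ); -2*(u:ℂ), -2*(v:ℂ), 4*(u:ℂ)^2+4*(v:ℂ)^2-1] := by
  ext i j
  fin_cases i <;> fin_cases j <;>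
    simp [matA, matB, matC, Matrix.mul_apply, Fin.sum_univ_three,
      Matrix.vecHead, Matrix.vecTail] <;> ring

private lemma mulVec_pow {X : Matrix (Fin 3) (Fin 3) ℂ} {z : Fin 3 → ℂ} {c : ℂ}
    (h : X.mulVec z = c • z) (n : ℕ) : (X ^ n).mulVec z = c ^ n • z := by
  induction n with
  | zero => simp
  | succ n ih =>
    rw [pow_succ', ← Matrix.mulVec_mulVec, ih, Matrix.mulVec_smul, h, smul_smul, ← pow_succ]

private lemma hyper_infinite (u v : ℝ) (hu : 0 < u) (hw : 1 < u^2 + v^2) {n : ℕ}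
    (hn : n ≠ 0) : (matC u v * matA u * matB v) ^ n ≠ 1 := by
  intro hone
  obtain ⟨μ, hμ1, hquad⟩ : ∃ μ : ℝ, 1 < μ ∧ μ^2 - (4*(u^2+v^2)-2)*μ + 1 = 0 := by
    set T : ℝ := 4*(u^2+v^2) - 2 with hT
    have hT2 : 2 < T := by rw [hT]; nlinarith
    have hs0 : 0 ≤ T^2 - 4 := by nlinarith
    have hsq : Real.sqrt (T^2-4) ^ 2 = T^2 - 4 := Real.sq_sqrt hs0
    have hsnn := Real.sqrt_nonneg (T^2 - 4)
    refine ⟨(T + Real.sqrt (T^2 - 4)) / 2, by nlinarith, by field_simp; nlinarith [hsq]⟩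
  set y : Fin 3 → ℂ := ![(2*u : ℝ), (2*v : ℝ), 1 + (μ:ℝ)] with hy
  have hqC : (μ:ℂ)^2 - (4*(u:ℂ)^2+4*(v:ℂ)^2-2)*(μ:ℂ) + 1 = 0 := by
    have := congrArg (Complex.ofReal) hquad
    push_cast at this
    linear_combination this
  have hgy : (matC u v * matA u * matB v).mulVec y = (μ:ℂ) • y := by
    rw [matG_eq]
    funext i
    fin_cases i <;>
      simp [hy, Matrix.mulVec, dotProduct, Fin.sum_univ_three,
        Matrix.vecHead, Matrix.vecTail] <;>
      push_cast <;>
      first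
        | ring1
        | linear_combination -hqC
  have hiter := mulVec_pow hgy n
  rw [hone] at hiter
  simp only [Matrix.one_mulVec] at hiter
  have h2 := congrFun hiter 2
  have h2' : (1 : ℂ) + (μ:ℂ) = (μ:ℂ)^n * (1 + (μ:ℂ)) := by
    simpa [hy, Pi.smul_apply, smul_eq_mul] using h2
  have hne : (1 + (μ:ℂ)) ≠ 0 := by
    intro h
    have : (1 + μ : ℝ) = 0 := by exact_mod_cast h
    nlinarith
  have hμn : ((μ:ℂ)) ^ n = 1 := by
    have hmul : ((μ:ℂ))^n * (1 + (μ:ℂ)) = 1 * (1 + (μ:ℂ)) := by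
      rw [one_mul, ← h2']
    exact mul_right_cancel₀ hne hmul
  have hr : (μ:ℝ) ^ n = 1 := by exact_mod_cast hμn
  nlinarith [one_lt_pow₀ hμ1 hn]

private lemma eucl_infinite (u v : ℝ) (hu : 0 < u) (hw : u^2 + v^2 = 1) {n : ℕ}
    (hn : n ≠ 0) : (matC u v * matA u * matB v) ^ n ≠ 1 := by
  intro hone
  set y : Fin 3 → ℂ := ![(2*u : ℝ), (2*v : ℝ), 2] with hy
  set x : Fin 3 → ℂ := ![0, 0, 1] with hx
  have hwC : (u:ℂ)^2 + (v:ℂ)^2 = 1 := by exact_mod_cast congrArg (Complex.ofReal) hw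
  have hgy : (matC u v * matA u * matB v).mulVec y = y := by
    rw [matG_eq]
    funext i
    fin_cases i <;>
      simp [hy, Matrix.mulVec, dotProduct, Fin.sum_univ_three,
        Matrix.vecHead, Matrix.vecTail] <;>
      push_cast <;>
      first
        | ring1
        | linear_combination (2:ℂ) * hwC
        | linear_combination (4:ℂ) * hwC
        | linear_combination (6:ℂ) * hwC
        | linear_combination (-2:ℂ) * hwC
        | linear_combination (-4:ℂ) * hwC
        | linear_combination (-6:ℂ) * hwC
  have hgx : (matC u v * matA u * matB v).mulVec x = x + y := by
    rw [matG_eq]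
    funext i
    fin_cases i <;>
      simp [hy, hx, Matrix.mulVec, dotProduct, Fin.sum_univ_three,
        Matrix.vecHead, Matrix.vecTail] <;>
      push_cast <;>
      first
        | ring1
        | linear_combination (2:ℂ) * hwC
        | linear_combination (4:ℂ) * hwC
        | linear_combination (6:ℂ) * hwC
        | linear_combination (-2:ℂ) * hwC
        | linear_combination (-4:ℂ) * hwC
        | linear_combination (-6:ℂ) * hwC
  have hpow : ∀ m : ℕ, ((matC u v * matA u * matB v) ^ m).mulVec x = x + (m : ℂ) • y := by
    intro m
    induction m with
    | zero => simp
    | succ m ih =>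
      rw [pow_succ', ← Matrix.mulVec_mulVec, ih, Matrix.mulVec_add, Matrix.mulVec_smul,
        hgx, hgy]
      push_cast
      module
  have hit := hpow n
  rw [hone] at hit
  simp only [Matrix.one_mulVec] at hit
  have h0 := congrFun hit 0
  simp [hx, hy, Pi.smul_apply, smul_eq_mul] at h0
  rcases h0 with h0 | h0
  · exact hn (by exact_mod_cast h0)
  · have : (u : ℝ) = 0 := by exact_mod_cast h0
    nlinarith

private lemma cos_sq_ge (q : ℕ) (hq : 4 ≤ q) : (1:ℝ)/2 ≤ Real.cos (π/q)^2 := by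
  have hq0 : (0:ℝ) < q := by positivity
  have h1 : π/q ≤ π/4 := by
    apply div_le_div_of_nonneg_left Real.pi_pos.le (by norm_num)
    exact_mod_cast hq
  have h2 : Real.cos (π/4) ≤ Real.cos (π/q) := by
    apply Real.cos_le_cos_of_nonneg_of_le_pi (by positivity) ?_ h1
    linarith [Real.pi_pos]
  rw [Real.cos_pi_div_four] at h2
  have h3 : (0:ℝ) < Real.sqrt 2 / 2 := by positivity
  nlinarith [Real.sq_sqrt (by norm_num : (2:ℝ) ≥ 0)]

end AuxMatStatement5

/-! ### Auxiliary group-theoretic lemmas -/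

section AuxGrpStatement5
variable {G : Type*} [Monoid G]

private lemma shift_pow (x y : G) (m : ℕ) : (y * x) ^ m * y = y * (x * y) ^ m := by
  induction m with
  | zero => simp
  | succ m ih =>
    calc (y * x) ^ (m + 1) * y = (y * x) * ((y * x) ^ m * y) := by
          rw [pow_succ']; simp [mul_assoc]
      _ = (y * x) * (y * (x * y) ^ m) := by rw [ih]
      _ = y * (x * y) ^ (m + 1) := by rw [pow_succ']; simp [mul_assoc]

private lemma flip_pow {x y : G} {m : ℕ} (h : (x * y) ^ m = 1) (hy : y * y = 1) :
    (y * x) ^ m = 1 := by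
  have h1 : (y * x) ^ m * y = y := by rw [shift_pow, h, mul_one]
  calc (y * x) ^ m = (y * x) ^ m * (y * y) := by rw [hy, mul_one]
    _ = ((y * x) ^ m * y) * y := by rw [mul_assoc]
    _ = y * y := by rw [h1]
    _ = 1 := hy

private lemma dihedral_closure_finite {G : Type*} [Group G] {a b : G} {m : ℕ} (hm : m ≠ 0)
    (ha : a * a = 1) (hb : b * b = 1) (hab : (a * b) ^ m = 1) :
    (Subgroup.closure {a, b} : Set G).Finite := by
  set p := a * b with hp
  have ha' : a⁻¹ = a := inv_eq_of_mul_eq_one_right ha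
  have hb' : b⁻¹ = b := inv_eq_of_mul_eq_one_right hb
  have hpinv : p⁻¹ = b * a := by rw [hp, mul_inv_rev, ha', hb']
  have hswap : ∀ k : ℤ, a * p ^ k = p ^ (-k) * a := by
    intro k
    have hconj : a * p * a⁻¹ = p⁻¹ := by
      rw [hp, ha', hpinv]
      calc a * (a * b) * a = (a * a) * (b * a) := by group
        _ = b * a := by rw [ha, one_mul]
    have : a * p ^ k * a⁻¹ = p ^ (-k) := by
      rw [zpow_neg]
      calc a * p ^ k * a⁻¹ = (a * p * a⁻¹) ^ k := by
            rw [conj_zpow]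
        _ = (p⁻¹) ^ k := by rw [hconj]
        _ = (p ^ k)⁻¹ := by rw [inv_zpow]
    calc a * p ^ k = (a * p ^ k * a⁻¹) * a := by group
      _ = p ^ (-k) * a := by rw [this]
  set H : Subgroup G :=
    { carrier := {g | ∃ k : ℤ, g = p ^ k ∨ g = p ^ k * a}
      one_mem' := ⟨0, Or.inl (by simp)⟩
      mul_mem' := by
        rintro x y ⟨j, hj | hj⟩ ⟨k, hk | hk⟩ <;> subst hj <;> subst hk
        · exact ⟨j + k, Or.inl (by rw [zpow_add])⟩
        · exact ⟨j + k, Or.inr (by rw [← mul_assoc, ← zpow_add])⟩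
        · refine ⟨j - k, Or.inr ?_⟩
          calc p ^ j * a * p ^ k = p ^ j * (a * p ^ k) := by rw [mul_assoc]
            _ = p ^ j * (p ^ (-k) * a) := by rw [hswap k]
            _ = (p ^ j * p ^ (-k)) * a := by rw [mul_assoc]
            _ = p ^ (j - k) * a := by rw [← zpow_add, ← sub_eq_add_neg]
        · refine ⟨j - k, Or.inl ?_⟩
          calc p ^ j * a * (p ^ k * a) = p ^ j * (a * p ^ k) * a := by group
            _ = p ^ j * (p ^ (-k) * a) * a := by rw [hswap k]
            _ = (p ^ j * p ^ (-k)) * (a * a) := by group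
            _ = p ^ (j - k) := by
                rw [ha, mul_one, ← zpow_add, ← sub_eq_add_neg]
      inv_mem' := by
        rintro x ⟨k, hk | hk⟩ <;> subst hk
        · exact ⟨-k, Or.inl (by rw [zpow_neg])⟩
        · refine ⟨k, Or.inr ?_⟩
          rw [mul_inv_rev, ha', ← zpow_neg, hswap (-k), neg_neg] } with hH
  have hsub : Subgroup.closure {a, b} ≤ H := by
    apply (Subgroup.closure_le H).mpr
    rintro x (rfl | rfl)
    · exact ⟨0, Or.inr (by simp)⟩
    · refine ⟨-1, Or.inr ?_⟩
      rw [zpow_neg, zpow_one, hpinv, mul_assoc, ha, mul_one]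
  have hfin : (H : Set G).Finite := by
    have hpfin : IsOfFinOrder p :=
      isOfFinOrder_iff_pow_eq_one.mpr ⟨m, Nat.pos_of_ne_zero hm, hab⟩
    have hzp : ((Subgroup.zpowers p : Subgroup G) : Set G).Finite := hpfin.finite_zpowers
    have hcov : (H : Set G) ⊆ ((Subgroup.zpowers p : Subgroup G) : Set G) ∪
        (fun g => g * a) '' ((Subgroup.zpowers p : Subgroup G) : Set G) := by
      intro x hx
      obtain ⟨k, hk | hk⟩ := hx
      · exact Or.inl (Subgroup.mem_zpowers_iff.mpr ⟨k, hk.symm⟩)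
      · exact Or.inr ⟨p ^ k, Subgroup.mem_zpowers_iff.mpr ⟨k, rfl⟩, hk.symm⟩
    exact Set.Finite.subset (hzp.union (hzp.image _)) hcov
  exact hfin.subset hsub

private lemma invol_pow {x : G} {m : ℕ} (hx : x * x = 1) (hm : m = 0 ∨ Even m) :
    x ^ m = 1 := by
  rcases hm with rfl | ⟨k, rfl⟩
  · simp
  · rw [← two_mul, pow_mul, pow_two, hx, one_pow]

end AuxGrpStatement5

/-- Lemma 3.1: even system with flag nerve; if
`s, s' ∈ S' = {s | 2 < m_{st} < ∞}` then `s = s'` or `m_{ss'} = ∞`. -/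
theorem statement5 {B W : Type*} [Group W] {M : CoxeterMatrix B}
    (cs : CoxeterSystem M W) (heven : M.IsEven) (hflag : cs.HasFlagNerve)
    (t s s' : B) (hs : 2 < M s t) (hs' : 2 < M s' t) :
    s = s' ∨ M s s' = 0 := by
  classical
  by_cases hss : s = s'
  · exact Or.inl hss
  by_cases h0 : M s s' = 0
  · exact Or.inr h0
  exfalso
  -- distinctness
  have hst : s ≠ t := by
    rintro rfl
    rw [M.diagonal] at hs
    omega
  have hs't : s' ≠ t := by
    rintro rfl
    rw [M.diagonal] at hs'
    omega
  -- evenness facts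
  have hq_even : Even (M s t) := (heven s t hst).resolve_left (by omega)
  have hr_even : Even (M s' t) := (heven s' t hs't).resolve_left (by omega)
  have hp_even : Even (M s s') := (heven s s' hss).resolve_left h0
  have hq4 : 4 ≤ M s t := by obtain ⟨k, hk⟩ := hq_even; omega
  have hr4 : 4 ≤ M s' t := by obtain ⟨k, hk⟩ := hr_even; omega
  -- every finite-exponent pair is spherical
  have hpair : ∀ i j : B, M i j ≠ 0 → cs.IsSpherical {i, j} := by
    intro i j hij
    show (cs.parabolic {i, j} : Set W).Finite
    unfold CoxeterSystem.parabolic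
    rw [Set.image_pair]
    exact dihedral_closure_finite hij (cs.simple_mul_simple_self i)
      (cs.simple_mul_simple_self j) (cs.simple_mul_simple_pow i j)
  -- flagness: the triple {s, s', t} is spherical
  have hsph : (cs.parabolic ({s, s', t} : Set B) : Set W).Finite := by
    have hcoe : ((({s, s', t} : Finset B) : Set B)) = ({s, s', t} : Set B) := by simp
    have h := hflag {s, s', t} ?_
    · rw [hcoe] at h
      exact h
    · intro i hi j hj hij
      simp only [Finset.mem_insert, Finset.mem_singleton] at hi hj
      rcases hi with rfl | rfl | rfl <;> rcases hj with rfl | rfl | rfl <;>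
        first
          | exact absurd rfl hij
          | exact hpair _ _ h0
          | exact hpair _ _ (by rw [M.symmetric]; exact h0)
          | exact hpair _ _ (by omega)
          | exact hpair _ _ (by rw [M.symmetric]; omega)
  -- the matrix representation
  set u : ℝ := Real.cos (Real.pi / (M s t)) with hu
  set v : ℝ := Real.cos (Real.pi / (M s' t)) with hv
  set f : B → Matrix (Fin 3) (Fin 3) ℂ := fun i =>
    if i = s then matA u else if i = s' then matB v else if i = t then matC u v else 1
    with hf
  have hfs : f s = matA u := by simp [hf]
  have hfs' : f s' = matB v := by simp [hf, Ne.symm hss]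
  have hft : f t = matC u v := by simp [hf, Ne.symm hst, Ne.symm hs't]
  have hACq : (matA u * matC u v) ^ (M s t) = 1 := by
    rw [hu]
    exact key_rot (M s t) (by omega) v
  have hBCr : (matB v * matC u v) ^ (M s' t) = 1 := by
    have h1 : (matA v * matC v u) ^ (M s' t) = 1 := by
      rw [hv]
      exact key_rot (M s' t) (by omega) u
    have hSS : ∀ X : Matrix (Fin 3) (Fin 3) ℂ, matS * (matS * X) = X := fun X => by
      rw [← mul_assoc, matS_sq, one_mul]
    calc (matB v * matC u v) ^ (M s' t)
        = ((matS * matA v * matS) * (matS * matC v u * matS)) ^ (M s' t) := by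
          rw [← matB_conj, ← matC_conj]
      _ = (matS * (matA v * matC v u) * matS) ^ (M s' t) := by
          congr 1
          simp only [mul_assoc, hSS]
      _ = matS * (matA v * matC v u) ^ (M s' t) * matS := sandwich_pow matS_sq _
      _ = 1 := by rw [h1, mul_one, matS_sq]
  have hsqf : ∀ i, f i * f i = 1 := by
    intro i
    simp only [hf]
    split_ifs <;> simp [matA_sq, matB_sq, matC_sq]
  have hlift : M.IsLiftable f := by
    intro i j
    rcases eq_or_ne i j with rfl | hij
    · rw [M.diagonal, pow_one]
      exact hsqf i
    by_cases his : i = s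
    · by_cases hjs' : j = s'
      · rw [his, hjs', hfs, hfs']
        exact invol_pow (matAB_sq u v) (Or.inr hp_even)
      by_cases hjt : j = t
      · rw [his, hjt, hfs, hft]
        exact hACq
      · have hjs : j ≠ s := fun h => hij (by rw [his, h])
        have hfj : f j = 1 := by simp [hf, hjs, hjs', hjt]
        rw [his, hfs, hfj, mul_one]
        exact invol_pow (matA_sq u) (heven s j (fun h => hjs h.symm))
    by_cases his' : i = s'
    · by_cases hjs : j = s
      · rw [his', hjs, hfs', hfs]
        exact invol_pow (matBA_sq u v) (Or.inr (by rwa [M.symmetric s' s]))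
      by_cases hjt : j = t
      · rw [his', hjt, hfs', hft]
        exact hBCr
      · have hjs'2 : j ≠ s' := fun h => hij (by rw [his', h])
        have hfj : f j = 1 := by simp [hf, hjs, hjs'2, hjt]
        rw [his', hfs', hfj, mul_one]
        exact invol_pow (matB_sq v) (heven s' j (fun h => hjs'2 h.symm))
    by_cases hit : i = t
    · by_cases hjs : j = s
      · rw [hit, hjs, hft, hfs, M.symmetric t s]
        exact flip_pow hACq (matC_sq u v)
      by_cases hjs' : j = s'
      · rw [hit, hjs', hft, hfs', M.symmetric t s']
        exact flip_pow hBCr (matC_sq u v)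
      · have hjt : j ≠ t := fun h => hij (by rw [hit, h])
        have hfj : f j = 1 := by simp [hf, hjs, hjs', hjt]
        rw [hit, hft, hfj, mul_one]
        exact invol_pow (matC_sq u v) (heven t j (fun h => hjt h.symm))
    · have hfi : f i = 1 := by simp [hf, his, his', hit]
      rw [hfi, one_mul]
      exact invol_pow (hsqf j) (heven i j hij)
  -- the lifted homomorphism
  set φ : W →* Matrix (Fin 3) (Fin 3) ℂ := cs.lift ⟨f, hlift⟩ with hφ
  set w₀ : W := cs.simple t * cs.simple s * cs.simple s' with hw₀
  have hmem : w₀ ∈ cs.parabolic ({s, s', t} : Set B) := by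
    apply mul_mem
    apply mul_mem
    · exact Subgroup.subset_closure (Set.mem_image_of_mem _ (by simp))
    · exact Subgroup.subset_closure (Set.mem_image_of_mem _ (by simp))
    · exact Subgroup.subset_closure (Set.mem_image_of_mem _ (by simp))
  -- finite order of w₀
  obtain ⟨n, hn0, hwn⟩ : ∃ n : ℕ, n ≠ 0 ∧ w₀ ^ n = 1 := by
    have hninj : ¬ Function.Injective (fun n : ℕ => w₀ ^ n) := by
      intro hinj
      have hrange : Set.range (fun n : ℕ => w₀ ^ n) ⊆
          (cs.parabolic ({s, s', t} : Set B) : Set W) := by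
        rintro x ⟨n, rfl⟩
        exact pow_mem hmem n
      exact (Set.infinite_range_of_injective hinj) (hsph.subset hrange)
    rw [Function.not_injective_iff] at hninj
    obtain ⟨a, b, hab, hne⟩ := hninj
    rcases hne.lt_or_gt with h | h
    · refine ⟨b - a, by omega, ?_⟩
      have h1 : w₀ ^ a * w₀ ^ (b - a) = w₀ ^ a * 1 := by
        rw [mul_one, ← pow_add, Nat.add_sub_cancel' h.le]
        exact hab.symm
      exact mul_left_cancel h1
    · refine ⟨a - b, by omega, ?_⟩
      have h1 : w₀ ^ b * w₀ ^ (a - b) = w₀ ^ b * 1 := by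
        rw [mul_one, ← pow_add, Nat.add_sub_cancel' h.le]
        exact hab
      exact mul_left_cancel h1
  -- transport to matrices
  have hg : (matC u v * matA u * matB v) ^ n = 1 := by
    have h1 : φ w₀ = matC u v * matA u * matB v := by
      rw [hw₀, map_mul, map_mul, hφ, cs.lift_apply_simple, cs.lift_apply_simple,
        cs.lift_apply_simple, hft, hfs, hfs']
    calc (matC u v * matA u * matB v) ^ n = φ w₀ ^ n := by rw [h1]
      _ = φ (w₀ ^ n) := by rw [map_pow]
      _ = φ 1 := by rw [hwn]
      _ = 1 := map_one φ
  -- contradiction via the infinite-order element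
  have hu0 : 0 < u := by
    rw [hu]
    exact cos_pos_aux (M s t) (by omega)
  have husq : (1:ℝ)/2 ≤ u^2 := by rw [hu]; exact cos_sq_ge (M s t) hq4
  have hvsq : (1:ℝ)/2 ≤ v^2 := by rw [hv]; exact cos_sq_ge (M s' t) hr4
  rcases eq_or_lt_of_le (by linarith : (1:ℝ) ≤ u^2 + v^2) with hcase | hcase
  · exact eucl_infinite u v hu0 hcase.symm hn0 hg
  · exact hyper_infinite u v hu0 hcase hn0 hg
end

section
/- Let (W,S) be an even Coxeter system with flag nerve L, t ∈ S, s ∈ S with 2 < m_{st} < ∞, and let T be a spherical subset of S containing {s,t}. Then every u ∈ T \ {s,t} satisfies m_{ut} = m_{us} = 2, i.e., u commutes with both s and t. -/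
open CoxeterSystem

/-! If some `u ∈ T ∖ {s, t}` had `m_{su} ≠ 2`, evenness would force `m_{su} = ∞` or
`m_{su} ≥ 4`; together with `m_{st} ≥ 4` the triple `s, t, u` then satisfies the relations of a
Euclidean `(4, 4, 2)` or a hyperbolic `(p, q, 2)` triangle group. We realize such a triangle
group concretely (by affine reflections of `ℤ²`, resp. by reflections in `PGL(2, ℝ)`), where it
contains an element of infinite order. Sending `s, t, u` to the three reflections and every other
generator to `1` respects all Coxeter relations because every `m` is even, so it defines a
homomorphism from `W`; it maps the finite group `W_T` onto a group containing that element of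
infinite order, a contradiction. -/

theorem Subgroup.isOfFinOrder_of_mem {G : Type*} [Group G] {H : Subgroup G}
    (hH : (H : Set G).Finite) {g : G} (hg : g ∈ H) : IsOfFinOrder g := by
  have : Finite H := hH.to_subtype
  exact (Submonoid.isOfFinOrder_coe (H := H.toSubmonoid) (x := ⟨g, hg⟩)).mpr
    (isOfFinOrder_of_finite (⟨g, hg⟩ : H))

section Involutions

variable {G : Type*} [Group G] {a b : G}

theorem mul_pow_eq_one_comm_of_involutive (ha : a * a = 1) (hb : b * b = 1) {n : ℕ}
    (h : (a * b) ^ n = 1) : (b * a) ^ n = 1 := by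
  have hba : b * a = (a * b)⁻¹ := by
    rw [mul_inv_rev, inv_eq_of_mul_eq_one_left ha, inv_eq_of_mul_eq_one_left hb]
  rw [hba, inv_pow, h, inv_one]

theorem pow_eq_one_of_involutive_of_even (ha : a * a = 1) {n : ℕ} (hn : Even n) : a ^ n = 1 := by
  obtain ⟨k, rfl⟩ := hn
  rw [← two_mul, pow_mul, sq, ha, one_pow]

end Involutions

namespace CoxeterMatrix

variable {B : Type*} {M : CoxeterMatrix B}

theorem IsEven.even (heven : M.IsEven) {i j : B} (hij : i ≠ j) : Even (M i j) :=
  (heven i j hij).elim (fun h => h ▸ Even.zero) id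

theorem IsEven.isLiftable (heven : M.IsEven) {G : Type*} [Group G] {f : B → G}
    (hinv : ∀ i, f i * f i = 1)
    (hrel : ∀ i j, i ≠ j → f i ≠ 1 → f j ≠ 1 → (f i * f j) ^ M i j = 1) : M.IsLiftable f := by
  intro i j
  rcases eq_or_ne i j with rfl | hij
  · rw [M.diagonal, pow_one, hinv]
  by_cases hi : f i = 1
  · rw [hi, one_mul]
    exact pow_eq_one_of_involutive_of_even (hinv j) (heven.even hij)
  by_cases hj : f j = 1
  · rw [hj, mul_one]
    exact pow_eq_one_of_involutive_of_even (hinv i) (heven.even hij)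
  exact hrel i j hij hi hj

end CoxeterMatrix

namespace CoxeterSystem

variable {B W : Type*} [Group W] {M : CoxeterMatrix B} {cs : CoxeterSystem M W}

theorem IsSpherical.isOfFinOrder_of_mem_closure {T : Set B} (hT : cs.IsSpherical T)
    {G : Type*} [Group G] {f : B → G} (hf : M.IsLiftable f) {g : G}
    (hg : g ∈ Subgroup.closure (f '' T)) : IsOfFinOrder g := by
  have hmap : (cs.parabolic T).map (cs.lift ⟨f, hf⟩) = Subgroup.closure (f '' T) := by
    rw [parabolic, MonoidHom.map_closure, Set.image_image]
    simp only [lift_apply_simple]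
  rw [← hmap] at hg
  exact Subgroup.isOfFinOrder_of_mem (by rw [Subgroup.coe_map]; exact hT.image _) hg

theorem IsSpherical.isOfFinOrder_of_triangle {T : Set B} (hT : cs.IsSpherical T)
    (heven : M.IsEven) {s t u : B} (hs : s ∈ T) (ht : t ∈ T) (hu : u ∈ T)
    (hst : s ≠ t) (hsu : s ≠ u) (htu : t ≠ u) {G : Type*} [Group G] {X Y Z : G}
    (hX : X * X = 1) (hY : Y * Y = 1) (hZ : Z * Z = 1) (hXY : (X * Y) ^ M s t = 1)
    (hXZ : (X * Z) ^ M s u = 1) (hYZ : (Y * Z) ^ M t u = 1) {g : G}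
    (hg : g ∈ Subgroup.closure {X, Y, Z}) : IsOfFinOrder g := by
  classical
  let f : B → G := fun i => if i = s then X else if i = t then Y else if i = u then Z else 1
  have hfs : f s = X := by simp [f]
  have hft : f t = Y := by simp [f, hst.symm]
  have hfu : f u = Z := by simp [f, hsu.symm, htu.symm]
  have hf_cases : ∀ i, f i ≠ 1 → i = s ∨ i = t ∨ i = u := by
    intro i hi
    by_contra! h
    simp [f, h.1, h.2.1, h.2.2] at hi
  have hinv : ∀ i, f i * f i = 1 := by
    intro i
    by_cases hi : f i = 1
    · rw [hi, one_mul]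
    rcases hf_cases i hi with rfl | rfl | rfl <;> simpa [hfs, hft, hfu]
  have hlift : M.IsLiftable f := heven.isLiftable hinv fun i j hij hi hj => by
    rcases hf_cases i hi with rfl | rfl | rfl <;> rcases hf_cases j hj with rfl | rfl | rfl <;>
      first
      | exact absurd rfl hij
      | simp only [hfs, hft, hfu]; assumption
      | simp only [hfs, hft, hfu, M.symmetric i j]
        exact mul_pow_eq_one_comm_of_involutive (by assumption) (by assumption) (by assumption)
  refine hT.isOfFinOrder_of_mem_closure hlift (Subgroup.closure_mono ?_ hg)
  rintro x (rfl | rfl | rfl)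
  exacts [⟨s, hs, hfs⟩, ⟨t, ht, hft⟩, ⟨u, hu, hfu⟩]

end CoxeterSystem

theorem mul_pow_mul_mul_pow_mem_closure {G : Type*} [Group G] (X Y Z : G) (a b : ℕ) :
    (X * Y) ^ a * (X * Z) ^ b ∈ Subgroup.closure {X, Y, Z} := by
  have hmem : ∀ x ∈ ({X, Y, Z} : Set G), x ∈ Subgroup.closure {X, Y, Z} :=
    fun _ hx => Subgroup.subset_closure hx
  exact mul_mem (pow_mem (mul_mem (hmem X (by simp)) (hmem Y (by simp))) a)
    (pow_mem (mul_mem (hmem X (by simp)) (hmem Z (by simp))) b)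

/-- Three involutions satisfying the Coxeter relations of the triangle group with exponents
`p q r` (`0` meaning no relation) generate a group with an element of infinite order. -/
def InfiniteTriangle (p q r : ℕ) : Prop :=
  ∃ (G : Type) (_ : Group G) (X Y Z : G), X * X = 1 ∧ Y * Y = 1 ∧ Z * Z = 1 ∧
    (X * Y) ^ p = 1 ∧ (X * Z) ^ q = 1 ∧ (Y * Z) ^ r = 1 ∧
    ∃ g ∈ Subgroup.closure {X, Y, Z}, ¬IsOfFinOrder g

namespace InfiniteTriangle

theorem of_dvd {p q r p' q' r' : ℕ} (h : InfiniteTriangle p q r) (hp : p ∣ p') (hq : q ∣ q')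
    (hr : r ∣ r') : InfiniteTriangle p' q' r' := by
  obtain ⟨G, _, X, Y, Z, hX, hY, hZ, hXY, hXZ, hYZ, hg⟩ := h
  have hdvd : ∀ {a : G} {m n : ℕ}, a ^ m = 1 → m ∣ n → a ^ n = 1 := fun h hd =>
    orderOf_dvd_iff_pow_eq_one.mp ((orderOf_dvd_of_pow_eq_one h).trans hd)
  exact ⟨G, _, X, Y, Z, hX, hY, hZ, hdvd hXY hp, hdvd hXZ hq, hdvd hYZ hr, hg⟩

theorem of_quotient {p q r : ℕ} {H : Type} [Group H] (N : Subgroup H) [N.Normal] {X Y Z : H}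
    (hX : X * X ∈ N) (hY : Y * Y ∈ N) (hZ : Z * Z ∈ N) (hXY : (X * Y) ^ p ∈ N)
    (hXZ : (X * Z) ^ q ∈ N) (hYZ : (Y * Z) ^ r ∈ N) {g : H} (hg : g ∈ Subgroup.closure {X, Y, Z})
    (hgN : ∀ n, g ^ n ∈ N → n = 0) : InfiniteTriangle p q r := by
  let π := QuotientGroup.mk' N
  have hπ : ∀ {h}, h ∈ N → π h = 1 := (QuotientGroup.eq_one_iff _).mpr
  refine ⟨H ⧸ N, inferInstance, π X, π Y, π Z, ?_, ?_, ?_, ?_, ?_, ?_, π g, ?_, ?_⟩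
  · rw [← map_mul, hπ hX]
  · rw [← map_mul, hπ hY]
  · rw [← map_mul, hπ hZ]
  · rw [← map_mul, ← map_pow, hπ hXY]
  · rw [← map_mul, ← map_pow, hπ hXZ]
  · rw [← map_mul, ← map_pow, hπ hYZ]
  · have := Subgroup.mem_map_of_mem π hg
    rwa [MonoidHom.map_closure, Set.image_insert_eq, Set.image_insert_eq, Set.image_singleton]
      at this
  · rw [isOfFinOrder_iff_pow_eq_one]
    rintro ⟨n, hn, hgn⟩
    rw [← map_pow, QuotientGroup.mk'_apply, QuotientGroup.eq_one_iff] at hgn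
    exact hn.ne' (hgN n hgn)

end InfiniteTriangle

/-- `X`, `Y`, `Z` are the reflections of `ℤ²` in the sides `b = 0`, `a = b`, `a + b = 1` of a
triangle with angles `π/4, π/4, π/2`. -/
theorem infiniteTriangle_four_four_two : InfiniteTriangle 4 4 2 := by
  let X : Equiv.Perm (ℤ × ℤ) :=
    ⟨fun v => (v.1, -v.2), fun v => (v.1, -v.2), fun v => by simp, fun v => by simp⟩
  let Y : Equiv.Perm (ℤ × ℤ) :=
    ⟨fun v => (v.2, v.1), fun v => (v.2, v.1), fun _ => rfl, fun _ => rfl⟩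
  let Z : Equiv.Perm (ℤ × ℤ) :=
    ⟨fun v => (1 - v.2, 1 - v.1), fun v => (1 - v.2, 1 - v.1), fun v => by simp,
      fun v => by simp⟩
  have htransl : ∀ n : ℕ, ∀ v, ((X * Y * (X * Z)) ^ n) v = (v.1 - n, v.2 - n) := by
    intro n
    induction n with
    | zero => simp
    | succ n ih =>
      intro v
      rw [pow_succ', Equiv.Perm.mul_apply, ih]
      simp only [X, Y, Z, Equiv.Perm.mul_apply, Equiv.coe_fn_mk]
      push_cast
      ext <;> ring
  have hinf : ¬IsOfFinOrder (X * Y * (X * Z)) := by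
    rw [isOfFinOrder_iff_pow_eq_one]
    rintro ⟨n, hn, hgn⟩
    have := congrArg Prod.fst (htransl n 0)
    rw [hgn] at this
    simp at this
    omega
  refine ⟨Equiv.Perm (ℤ × ℤ), inferInstance, X, Y, Z, ?_, ?_, ?_, ?_, ?_, ?_, X * Y * (X * Z),
    by simpa using mul_pow_mul_mul_pow_mem_closure X Y Z 1 1, hinf⟩ <;>
  ext v : 2 <;> simp [X, Y, Z, pow_succ]

theorem Matrix.GeneralLinearGroup.sq_mem_center_of_trace_eq_zero {R : Type*} [CommRing R]
    {A : GL (Fin 2) R} (h : (A : Matrix (Fin 2) (Fin 2) R).trace = 0) :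
    A ^ 2 ∈ Subgroup.center (GL (Fin 2) R) := by
  refine mem_center_iff_val_mem_range_scalar.mpr ⟨-(A : Matrix (Fin 2) (Fin 2) R).det, ?_⟩
  rw [trace_fin_two] at h
  ext i j
  fin_cases i <;> fin_cases j <;> simp [sq, Matrix.mul_apply, det_fin_two]
  · linear_combination (-A 0 0) * h
  · linear_combination (-A 0 1) * h
  · linear_combination (-A 1 0) * h
  · linear_combination (-A 1 1) * h

namespace Real

theorem pi_div_add_pi_div_lt {p q : ℝ} (hp : 0 < p) (hq : 0 < q) (hpq : 2 * (p + q) < p * q) :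
    π / p + π / q < π / 2 := by
  rw [div_add_div _ _ hp.ne' hq.ne', div_lt_div_iff₀ (by positivity) two_pos]
  nlinarith [pi_pos]

theorem exists_pos_cosh_mul_eq {φ ψ : ℝ} (hφ : 0 < φ) (hψ : 0 < ψ) (h : φ + ψ < π / 2) :
    ∃ t, 0 < t ∧ cosh t * (sin φ * sin ψ) = cos φ * cos ψ := by
  have hsin : 0 < sin φ * sin ψ :=
    mul_pos (sin_pos_of_pos_of_lt_pi hφ (by linarith)) (sin_pos_of_pos_of_lt_pi hψ (by linarith))
  have hlt : sin φ * sin ψ < cos φ * cos ψ := by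
    have := cos_pos_of_mem_Ioo ⟨by linarith, h⟩
    rw [cos_add] at this
    linarith
  have hx : 1 < cos φ * cos ψ / (sin φ * sin ψ) := (one_lt_div hsin).mpr hlt
  refine ⟨arcosh _, arcosh_pos hx, ?_⟩
  rw [cosh_arcosh hx.le, div_mul_cancel₀ _ hsin.ne']

end Real

namespace HyperbolicTriangle

open Real Matrix

noncomputable def rot (θ : ℝ) : GL (Fin 2) ℝ :=
  GeneralLinearGroup.mkOfDetNeZero !![cos θ, -sin θ; sin θ, cos θ] (by
    simp [det_fin_two, ← sq])

noncomputable def mirror : GL (Fin 2) ℝ :=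
  GeneralLinearGroup.mkOfDetNeZero !![1, 0; 0, -1] (by simp [det_fin_two])

noncomputable def stretch (a b : ℝ) : GL (Fin 2) ℝ :=
  GeneralLinearGroup.mkOfDetNeZero !![exp a, 0; 0, exp b] (by simp [det_fin_two, exp_ne_zero])

theorem rot_mul_rot (a b : ℝ) : rot a * rot b = rot (a + b) := by
  ext i j
  fin_cases i <;> fin_cases j <;> simp [rot, Matrix.mul_apply, cos_add, sin_add] <;> ring

theorem rot_pow (θ : ℝ) (n : ℕ) : rot θ ^ n = rot (n * θ) := by
  induction n with
  | zero => ext i j; fin_cases i <;> fin_cases j <;> simp [rot]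
  | succ n ih => rw [pow_succ, ih, rot_mul_rot]; push_cast; ring_nf

theorem rot_pi : rot π = -1 := by
  ext i j; fin_cases i <;> fin_cases j <;> simp [rot]

theorem rot_neg_pi : rot (-π) = -1 := by
  ext i j; fin_cases i <;> fin_cases j <;> simp [rot]

theorem mirror_mul_self : mirror * mirror = 1 := by
  ext i j; fin_cases i <;> fin_cases j <;> simp [mirror]

theorem mirror_mul_rot_mul_self (θ : ℝ) : mirror * rot θ * (mirror * rot θ) = 1 := by
  ext i j; fin_cases i <;> fin_cases j <;> simp [mirror, rot, Matrix.mul_apply] <;>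
    first | ring1 | linear_combination cos_sq_add_sin_sq θ

theorem mirror_mul_stretch (a b : ℝ) : mirror * stretch a b = stretch a b * mirror := by
  ext i j; fin_cases i <;> fin_cases j <;> simp [mirror, stretch, Matrix.mul_apply]

theorem stretch_mul_stretch (a b c d : ℝ) :
    stretch a b * stretch c d = stretch (a + c) (b + d) := by
  ext i j; fin_cases i <;> fin_cases j <;> simp [stretch, Matrix.mul_apply, exp_add]

theorem stretch_inv (a b : ℝ) : (stretch a b)⁻¹ = stretch (-a) (-b) := by
  rw [inv_eq_iff_mul_eq_one, stretch_mul_stretch]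
  ext i j; fin_cases i <;> fin_cases j <;> simp [stretch]

theorem stretch_pow (a b : ℝ) (n : ℕ) : stretch a b ^ n = stretch (n * a) (n * b) := by
  induction n with
  | zero => ext i j; fin_cases i <;> fin_cases j <;> simp [stretch]
  | succ n ih => rw [pow_succ, ih, stretch_mul_stretch]; push_cast; ring_nf

theorem rot_mul_stretch_mul_rot (a b : ℝ) :
    rot (π / 2) * stretch a b * rot (-(π / 2)) = stretch b a := by
  ext i j; fin_cases i <;> fin_cases j <;> simp [stretch, rot, Matrix.mul_apply]

theorem eq_of_stretch_mem_center {a b : ℝ} (h : stretch a b ∈ Subgroup.center (GL (Fin 2) ℝ)) :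
    a = b := by
  obtain ⟨c, hc⟩ := GeneralLinearGroup.mem_center_iff_val_mem_range_scalar.mp h
  have h0 := congrFun (congrFun hc 0) 0
  have h1 := congrFun (congrFun hc 1) 1
  simp [stretch] at h0 h1
  exact exp_injective (h0.symm.trans h1)

theorem neg_one_mem_center : (-1 : GL (Fin 2) ℝ) ∈ Subgroup.center (GL (Fin 2) ℝ) :=
  Subgroup.mem_center_iff.mpr fun g => by simp

theorem trace_mirror_mul_rot_mul_conj {φ ψ t : ℝ} (h : cosh t * (sin φ * sin ψ) = cos φ * cos ψ) :
    (↑(mirror * rot φ * (stretch t 0 * (mirror * rot (-ψ)) * (stretch t 0)⁻¹)) :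
      Matrix (Fin 2) (Fin 2) ℝ).trace = 0 := by
  rw [stretch_inv]
  simp [mirror, rot, stretch, trace_fin_two, cosh_eq] at h ⊢
  have hexp : exp t * exp (-t) = 1 := by rw [← exp_add, add_neg_cancel, exp_zero]
  linear_combination cos φ * cos ψ * hexp - 2 * h

theorem mirror_mul_conj_mirror_mul (a b : ℝ) (g : GL (Fin 2) ℝ) :
    mirror * (stretch a b * (mirror * g) * (stretch a b)⁻¹) =
      stretch a b * g * (stretch a b)⁻¹ := by
  rw [← mul_assoc, ← mul_assoc, mirror_mul_stretch, mul_assoc (stretch a b) mirror,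
    ← mul_assoc mirror, mirror_mul_self, one_mul]

theorem rot_pow_mul_conj_rot_pow {φ ψ t : ℝ} {k l : ℕ} (hk : k * φ = π / 2)
    (hl : l * ψ = π / 2) :
    rot φ ^ k * (stretch t 0 * rot (-ψ) * (stretch t 0)⁻¹) ^ l = stretch (-t) t := by
  rw [conj_pow, rot_pow, rot_pow, hk, mul_neg, hl, ← mul_assoc, ← mul_assoc,
    rot_mul_stretch_mul_rot, stretch_inv, stretch_mul_stretch]
  simp

end HyperbolicTriangle

open HyperbolicTriangle Real in
/-- In `PGL(2, ℝ)`, `X * Y = rot φ` and `X * Z` is `rot (-ψ)` conjugated by `stretch t 0`, with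
`φ = π / p`, `ψ = π / q` and `cosh t = cot φ cot ψ` chosen so that `Y * Z` has trace `0`, i.e. is
an involution of `PGL(2, ℝ)`. The half-turns `(X * Y) ^ (p / 2)` and `(X * Z) ^ (q / 2)` compose
to the hyperbolic element `stretch (-t) t`. -/
theorem infiniteTriangle_of_hyperbolic {p q : ℕ} (hp : Even p) (hq : Even q)
    (hpq : 2 * (p + q) < p * q) : InfiniteTriangle p q 2 := by
  have hp0 : (0 : ℝ) < p := Nat.cast_pos.mpr (Nat.pos_of_ne_zero (by rintro rfl; simp at hpq))
  have hq0 : (0 : ℝ) < q := Nat.cast_pos.mpr (Nat.pos_of_ne_zero (by rintro rfl; simp at hpq))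
  obtain ⟨t, ht, hcosh⟩ := exists_pos_cosh_mul_eq (div_pos pi_pos hp0) (div_pos pi_pos hq0)
    (pi_div_add_pi_div_lt hp0 hq0 (by exact_mod_cast hpq))
  set φ := π / p
  set ψ := π / q
  have hpφ : (p : ℝ) * φ = π := mul_div_cancel₀ π hp0.ne'
  have hqψ : (q : ℝ) * ψ = π := mul_div_cancel₀ π hq0.ne'
  obtain ⟨k, rfl⟩ := hp
  obtain ⟨l, rfl⟩ := hq
  set s := stretch t 0
  have hXY : mirror * (mirror * rot φ) = rot φ := by rw [← mul_assoc, mirror_mul_self, one_mul]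
  have hXZ := mirror_mul_conj_mirror_mul t 0 (rot (-ψ))
  have hone := (Subgroup.center (GL (Fin 2) ℝ)).one_mem
  refine InfiniteTriangle.of_quotient (Subgroup.center _) (X := mirror) (Y := mirror * rot φ)
    (Z := s * (mirror * rot (-ψ)) * s⁻¹) ?_ ?_ ?_ ?_ ?_ ?_
    (mul_pow_mul_mul_pow_mem_closure _ _ _ k l) ?_
  · rwa [mirror_mul_self]
  · rwa [mirror_mul_rot_mul_self]
  · rwa [conj_mul, mirror_mul_rot_mul_self, mul_one, mul_inv_cancel]
  · rw [hXY, rot_pow, hpφ, rot_pi]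
    exact neg_one_mem_center
  · rw [hXZ, conj_pow, rot_pow, mul_neg, hqψ, rot_neg_pi]
    exact Subgroup.Normal.conj_mem inferInstance _ neg_one_mem_center s
  · exact Matrix.GeneralLinearGroup.sq_mem_center_of_trace_eq_zero
      (trace_mirror_mul_rot_mul_conj hcosh)
  · intro n hn
    rw [hXY, hXZ, rot_pow_mul_conj_rot_pow (by push_cast at hpφ; linarith)
      (by push_cast at hqψ; linarith), stretch_pow] at hn
    have hnt : (n : ℝ) * t = 0 := by linarith [eq_of_stretch_mem_center hn]
    exact_mod_cast (mul_eq_zero.mp hnt).resolve_right ht.ne'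

theorem infiniteTriangle_of_even {p q r : ℕ} (hp : Even p) (hq : Even q) (hr : Even r)
    (hp4 : 4 ≤ p) (hq2 : q ≠ 2) : InfiniteTriangle p q r := by
  have hr2 : 2 ∣ r := even_iff_two_dvd.mp hr
  rcases eq_or_ne q 0 with rfl | hq0
  -- `(X * Z) ^ 0 = 1` holds for any exponent of `X * Z`; `6` makes the triangle hyperbolic.
  · exact (infiniteTriangle_of_hyperbolic hp (by decide : Even 6) (by omega)).of_dvd dvd_rfl
      (dvd_zero 6) hr2
  by_cases h4 : 4 ∣ p ∧ 4 ∣ q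
  · exact infiniteTriangle_four_four_two.of_dvd h4.1 h4.2 hr2
  obtain ⟨a, rfl⟩ := hp
  obtain ⟨b, rfl⟩ := hq
  have h6 : 6 ≤ a + a ∧ 4 ≤ b + b ∨ 4 ≤ a + a ∧ 6 ≤ b + b := by omega
  refine (infiniteTriangle_of_hyperbolic ⟨a, rfl⟩ ⟨b, rfl⟩ ?_).of_dvd dvd_rfl dvd_rfl hr2
  rcases h6 with ⟨ha, hb⟩ | ⟨ha, hb⟩ <;> nlinarith

namespace CoxeterSystem

variable {B W : Type*} [Group W] {M : CoxeterMatrix B} {cs : CoxeterSystem M W}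

theorem IsSpherical.not_infiniteTriangle {T : Set B} (hT : cs.IsSpherical T) (heven : M.IsEven)
    {s t u : B} (hs : s ∈ T) (ht : t ∈ T) (hu : u ∈ T) (hst : s ≠ t) (hsu : s ≠ u)
    (htu : t ≠ u) : ¬InfiniteTriangle (M s t) (M s u) (M t u) :=
  fun ⟨_, _, _, _, _, hX, hY, hZ, hXY, hXZ, hYZ, _, hg, hinf⟩ =>
    hinf (hT.isOfFinOrder_of_triangle heven hs ht hu hst hsu htu hX hY hZ hXY hXZ hYZ hg)

theorem IsSpherical.coxeterMatrix_eq_two {T : Set B} (hT : cs.IsSpherical T) (heven : M.IsEven)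
    {s t u : B} (hs : s ∈ T) (ht : t ∈ T) (hu : u ∈ T) (hsu : s ≠ u) (htu : t ≠ u)
    (hst : 2 < M s t) : M s u = 2 := by
  have hst' : s ≠ t := by
    rintro rfl
    simp at hst
  have hst4 : 4 ≤ M s t := by
    obtain ⟨k, hk⟩ := heven.even hst'
    omega
  by_contra hsu2
  exact hT.not_infiniteTriangle heven hs ht hu hst' hsu htu <|
    infiniteTriangle_of_even (heven.even hst') (heven.even hsu) (heven.even htu) hst4 hsu2

end CoxeterSystem

theorem statement6_general {B W : Type*} [Group W] {M : CoxeterMatrix B}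
    (cs : CoxeterSystem M W) (heven : M.IsEven)
    (t s : B) (hst : 2 < M s t)
    (T : Set B) (hT : cs.IsSpherical T) (hsT : s ∈ T) (htT : t ∈ T) :
    ∀ u ∈ T, u ≠ s → u ≠ t → M u t = 2 ∧ M u s = 2 := by
  intro u huT hus hut
  have hts : 2 < M t s := M.symmetric s t ▸ hst
  exact ⟨M.symmetric t u ▸ hT.coxeterMatrix_eq_two heven htT hsT huT hut.symm hus.symm hts,
    M.symmetric s u ▸ hT.coxeterMatrix_eq_two heven hsT htT huT hus.symm hut.symm hst⟩

/-- Corollary 3.2: even system with flag nerve, `2 < m_{st} < ∞`,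
`T` spherical with `{s,t} ⊆ T`.  Then every `u ∈ T ∖ {s,t}` commutes with both
`s` and `t`. -/
theorem statement6 {B W : Type*} [Group W] {M : CoxeterMatrix B}
    (cs : CoxeterSystem M W) (heven : M.IsEven) (hflag : cs.HasFlagNerve)
    (t s : B) (hst : 2 < M s t)
    (T : Set B) (hT : cs.IsSpherical T) (hsT : s ∈ T) (htT : t ∈ T) :
    ∀ u ∈ T, u ≠ s → u ≠ t → M u t = 2 ∧ M u s = 2 :=
  statement6_general cs heven t s hst T hT hsT htT
end

section
/- Let (W,S) be an even Coxeter system, t ∈ S, U = { s : m_{st} < ∞ }, and let c : W_U → A be the coloring c(w) = w·ē as above. Suppose w, w' ∈ W_U satisfy c(w) = c(w') and S(w^{-1}w') ∪ {t} is spherical. Then w^{-1}w' ∈ W_{S(w^{-1}w') \ {t}}; in particular w^{-1}w' ∈ W_{U \ {t}}. -/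
open CoxeterSystem

/-- A family of homomorphisms `g_{UT} : W_U → W` (one for each `T ⊆ S`) sending
`s ↦ s` for `s ∈ U ∩ T` and `s ↦ e` otherwise, with image inside `W_T`. -/
def IsColoringFamily {B W : Type*} [Group W] {M : CoxeterMatrix B}
    (cs : CoxeterSystem M W) (U : Set B)
    (g : Set B → ((cs.parabolic U) →* W)) : Prop :=
  ∀ T : Set B, (∀ w, g T w ∈ cs.parabolic T) ∧
    (∀ i, ∀ hi : i ∈ U, i ∈ T →
      g T ⟨cs.simple i, Subgroup.subset_closure (Set.mem_image_of_mem _ hi)⟩ = cs.simple i) ∧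
    (∀ i, ∀ hi : i ∈ U, i ∉ T →
      g T ⟨cs.simple i, Subgroup.subset_closure (Set.mem_image_of_mem _ hi)⟩ = 1)

/-- Two vertices `w, w'` of `W_U` have the same color `c(w) = c(w')`: for every
spherical `T` containing `t`, the cosets `g_{UT}(w)W_{T∖{t}}` and
`g_{UT}(w')W_{T∖{t}}` agree. -/
def SameColor {B W : Type*} [Group W] {M : CoxeterMatrix B}
    (cs : CoxeterSystem M W) (t : B) (U : Set B)
    (g : Set B → ((cs.parabolic U) →* W)) (w w' : cs.parabolic U) : Prop :=
  ∀ T : Set B, cs.IsSpherical T → t ∈ T →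
    (QuotientGroup.mk (g T w) : W ⧸ cs.parabolic (T \ {t})) = QuotientGroup.mk (g T w')

/-! Write `v = w⁻¹w'` and `T = S(v) ∪ {t}`. Since the Coxeter matrix is even, sending the generators
outside `U` to `1` defines a retraction of `W` onto `W_U`; it shortens any word using a letter
outside `U`, so reduced words of elements of `W_U` only use letters of `U`, i.e. `S(v) ⊆ U`.
Thus `v` is a word in `U ∩ T`, which `g_{UT}` fixes, and equality of the colours at the spherical
set `T` says exactly that `v = g_{UT}(w)⁻¹ g_{UT}(w')` lies in `W_{T ∖ {t}} = W_{S(v) ∖ {t}}`. -/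

namespace CoxeterSystem

variable {B W : Type*} [Group W] {M : CoxeterMatrix B} (cs : CoxeterSystem M W)

theorem parabolic_mono {U V : Set B} (h : U ⊆ V) : cs.parabolic U ≤ cs.parabolic V :=
  Subgroup.closure_mono (Set.image_mono h)

theorem isLiftable_indicator_simple (heven : M.IsEven) (U : Set B) [DecidablePred (· ∈ U)] :
    M.IsLiftable (fun i => if i ∈ U then cs.simple i else 1) := by
  intro i j
  by_cases hij : i = j
  · subst hij
    by_cases hi : i ∈ U <;> simp [hi]
  -- `M i j` is even, so `(s_i s_j)^(M i j) = 1` survives killing `s_i` or `s_j`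
  have hpow : ∀ k : B, cs.simple k ^ M i j = 1 := by
    intro k
    rcases heven i j hij with h0 | ⟨r, hr⟩
    · simp [h0]
    · rw [hr, ← two_mul, pow_mul, cs.simple_sq, one_pow]
  by_cases hi : i ∈ U <;> by_cases hj : j ∈ U <;>
    simp [hi, hj, cs.simple_mul_simple_pow, hpow]

open Classical in
noncomputable def parabolicRetraction (heven : M.IsEven) (U : Set B) : W →* W :=
  cs.lift ⟨_, cs.isLiftable_indicator_simple heven U⟩

open Classical in
theorem parabolicRetraction_wordProd (heven : M.IsEven) (U : Set B) (ω : List B) :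
    cs.parabolicRetraction heven U (cs.wordProd ω) = cs.wordProd (ω.filter (· ∈ U)) := by
  induction ω with
  | nil => simp
  | cons i ω ih =>
    rw [cs.wordProd_cons, map_mul, ih, parabolicRetraction, cs.lift_apply_simple]
    by_cases hi : i ∈ U
    · rw [List.filter_cons_of_pos (by simpa), cs.wordProd_cons, if_pos hi]
    · rw [List.filter_cons_of_neg (by simpa), if_neg hi, one_mul]

theorem parabolicRetraction_apply_of_mem (heven : M.IsEven) {U : Set B} {v : W}
    (hv : v ∈ cs.parabolic U) : cs.parabolicRetraction heven U v = v := by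
  induction hv using Subgroup.closure_induction with
  | mem x hx =>
    obtain ⟨i, hi, rfl⟩ := hx
    rw [parabolicRetraction, cs.lift_apply_simple, if_pos hi]
  | one => simp
  | mul x y _ _ ihx ihy => rw [map_mul, ihx, ihy]
  | inv x _ ihx => rw [map_inv, ihx]

theorem lettersOf_subset_of_mem_parabolic (heven : M.IsEven) {U : Set B} {v : W}
    (hv : v ∈ cs.parabolic U) : cs.lettersOf v ⊆ U := by
  classical
  rintro i ⟨ω, hred, rfl, hi⟩
  have hfilter : cs.wordProd (ω.filter (· ∈ U)) = cs.wordProd ω := by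
    rw [← cs.parabolicRetraction_wordProd heven, cs.parabolicRetraction_apply_of_mem heven hv]
  have hlen : ω.length ≤ (ω.filter (· ∈ U)).length :=
    calc ω.length = cs.length (cs.wordProd (ω.filter (· ∈ U))) := by rw [hfilter, hred.eq]
      _ ≤ _ := cs.length_wordProd_le _
  have hall := List.length_filter_eq_length_iff.mp
    (le_antisymm (List.length_filter_le _ ω) hlen) i hi
  simpa using hall

theorem mem_parabolic_lettersOf (v : W) : v ∈ cs.parabolic (cs.lettersOf v) := by
  obtain ⟨ω, hred, rfl⟩ := cs.exists_isReduced v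
  refine list_prod_mem fun x hx => ?_
  obtain ⟨i, hi, rfl⟩ := List.mem_map.mp hx
  exact Subgroup.subset_closure ⟨i, ⟨ω, hred, rfl, hi⟩, rfl⟩

end CoxeterSystem

theorem IsColoringFamily.apply_of_mem_parabolic {B W : Type*} [Group W] {M : CoxeterMatrix B}
    {cs : CoxeterSystem M W} {U : Set B} {g : Set B → ((cs.parabolic U) →* W)}
    (hg : IsColoringFamily cs U g) (T : Set B) {x : W} (hx : x ∈ cs.parabolic (U ∩ T))
    (hxU : x ∈ cs.parabolic U) : g T ⟨x, hxU⟩ = x := by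
  have parabolic_inter_le : cs.parabolic (U ∩ T) ≤ cs.parabolic U :=
    cs.parabolic_mono Set.inter_subset_left
  induction hx using Subgroup.closure_induction with
  | mem x hx =>
    obtain ⟨i, ⟨hiU, hiT⟩, rfl⟩ := hx
    exact (hg T).2.1 i hiU hiT
  | one => exact map_one (g T)
  | mul x y hx hy ihx ihy =>
    calc g T ⟨x * y, hxU⟩ = g T (⟨x, parabolic_inter_le hx⟩ * ⟨y, parabolic_inter_le hy⟩) := rfl
      _ = x * y := by rw [map_mul, ihx, ihy]
  | inv x hx ihx =>
    calc g T ⟨x⁻¹, hxU⟩ = g T ⟨x, parabolic_inter_le hx⟩⁻¹ := rfl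
      _ = x⁻¹ := by rw [map_inv, ihx]

theorem SameColor.inv_mul_mem_parabolic_lettersOf_diff {B W : Type*} [Group W]
    {M : CoxeterMatrix B} {cs : CoxeterSystem M W} (heven : M.IsEven) {t : B} {U : Set B}
    {g : Set B → ((cs.parabolic U) →* W)} (hg : IsColoringFamily cs U g)
    {w w' : cs.parabolic U} (hc : SameColor cs t U g w w')
    (hsph : cs.IsSpherical (cs.lettersOf ((w : W)⁻¹ * (w' : W)) ∪ {t})) :
    (w : W)⁻¹ * (w' : W) ∈ cs.parabolic (cs.lettersOf ((w : W)⁻¹ * (w' : W)) \ {t}) := by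
  set v := (w : W)⁻¹ * (w' : W)
  set T := cs.lettersOf v ∪ {t}
  have hvU : v ∈ cs.parabolic U := (w⁻¹ * w').2
  have hvUT : v ∈ cs.parabolic (U ∩ T) :=
    cs.parabolic_mono (Set.subset_inter (cs.lettersOf_subset_of_mem_parabolic heven hvU)
      Set.subset_union_left) (cs.mem_parabolic_lettersOf v)
  have hgv : (g T w)⁻¹ * g T w' = v := by
    rw [← map_inv, ← map_mul]
    exact hg.apply_of_mem_parabolic T hvUT hvU
  have hcoset := QuotientGroup.eq.mp (hc T hsph (Or.inr rfl))
  rwa [hgv, Set.union_sdiff_right] at hcoset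

/-- key step of Lemma 3.6: if `w, w' ∈ W_U` have the same color
and `S(w⁻¹w') ∪ {t}` is spherical, then `w⁻¹w' ∈ W_{S(w⁻¹w') ∖ {t}}`; in
particular `w⁻¹w' ∈ W_{U∖{t}}`. -/
theorem statement10 {B W : Type*} [Group W] {M : CoxeterMatrix B}
    (cs : CoxeterSystem M W) (heven : M.IsEven) (t : B)
    (g : Set B → ((cs.parabolic {s | M s t ≠ 0}) →* W))
    (hg : IsColoringFamily cs {s | M s t ≠ 0} g)
    (w w' : cs.parabolic {s | M s t ≠ 0})
    (hc : SameColor cs t {s | M s t ≠ 0} g w w')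
    (hsph : cs.IsSpherical (cs.lettersOf ((w : W)⁻¹ * (w' : W)) ∪ {t})) :
    (w : W)⁻¹ * (w' : W) ∈ cs.parabolic (cs.lettersOf ((w : W)⁻¹ * (w' : W)) \ {t}) ∧
    (w : W)⁻¹ * (w' : W) ∈ cs.parabolic ({s | M s t ≠ 0} \ {t}) := by
  have hv := hc.inv_mul_mem_parabolic_lettersOf_diff heven hg hsph
  have hletters := cs.lettersOf_subset_of_mem_parabolic heven (w⁻¹ * w').2
  exact ⟨hv, cs.parabolic_mono (Set.sdiff_subset_sdiff_left hletters) hv⟩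
end

section
/- Let (W,S) be an even Coxeter system, t ∈ S, U = { s : m_{st} < ∞ }, and let par : W_U → Z/2 be the homomorphism counting occurrences of t mod 2. If w, w' ∈ W_U have the same color c(w) = c(w') under the coloring c(w) = w·ē on A = ∏_{T spherical, t∈T} W_T/W_{T\{t}}, then par(w) = par(w'). -/
open CoxeterSystem

/-- vertices with the same color have the same `t`-parity. -/
theorem statement11 {B W : Type*} [Group W] [DecidableEq B] {M : CoxeterMatrix B}
    (cs : CoxeterSystem M W) (heven : M.IsEven) (t : B)
    (φ : W →* Multiplicative (ZMod 2))
    (hφ : ∀ i : B, φ (cs.simple i) =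
      if i = t then Multiplicative.ofAdd (1 : ZMod 2) else 1)
    (g : Set B → ((cs.parabolic {s | M s t ≠ 0}) →* W))
    (hg : IsColoringFamily cs {s | M s t ≠ 0} g)
    (w w' : cs.parabolic {s | M s t ≠ 0})
    (hc : SameColor cs t {s | M s t ≠ 0} g w w') :
    φ (w : W) = φ (w' : W) := by
  -- `{t}` is spherical
  have hsph : cs.IsSpherical {t} := by
    have h1 : cs.parabolic {t} = Subgroup.zpowers (cs.simple t) := by
      rw [Subgroup.zpowers_eq_closure, CoxeterSystem.parabolic, Set.image_singleton]
    rw [CoxeterSystem.IsSpherical, h1]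
    exact IsOfFinOrder.finite_zpowers
      (isOfFinOrder_iff_pow_eq_one.mpr ⟨2, two_pos, cs.simple_sq t⟩)
  -- same color at `T = {t}` gives equality of `g {t} w` and `g {t} w'`
  have heq : g {t} w = g {t} w' := by
    have h2 := hc {t} hsph rfl
    rw [QuotientGroup.eq] at h2
    have hbot : cs.parabolic (({t} : Set B) \ {t}) = ⊥ := by
      rw [Set.diff_self, CoxeterSystem.parabolic, Set.image_empty, Subgroup.closure_empty]
    rw [hbot, Subgroup.mem_bot] at h2
    exact inv_mul_eq_one.mp h2
  -- `φ ∘ g {t} = φ` on `W_U`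
  have key : ∀ x : cs.parabolic {s | M s t ≠ 0}, φ (g {t} x) = φ (x : W) := by
    rintro ⟨x, hx⟩
    induction hx using Subgroup.closure_induction with
    | mem y hy =>
        obtain ⟨i, hi, rfl⟩ := hy
        by_cases hit : i = t
        · subst hit
          exact congrArg φ ((hg {i}).2.1 i hi rfl)
        · exact (congrArg φ ((hg {t}).2.2 i hi hit)).trans
            (by rw [map_one, hφ i, if_neg hit])
    | one =>
        show φ (g ({t} : Set B) 1) = φ ((1 : cs.parabolic {s | M s t ≠ 0}) : W)
        simp
    | mul x y hx hy ihx ihy =>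
        have e : (⟨x * y, mul_mem hx hy⟩ : cs.parabolic {s | M s t ≠ 0})
            = ⟨x, hx⟩ * ⟨y, hy⟩ := rfl
        simp only [e, map_mul, Subgroup.coe_mul, ihx, ihy]
    | inv x hx ihx =>
        have e : (⟨x⁻¹, inv_mem hx⟩ : cs.parabolic {s | M s t ≠ 0})
            = (⟨x, hx⟩ : cs.parabolic {s | M s t ≠ 0})⁻¹ := rfl
        simp only [e, map_inv, InvMemClass.coe_inv, ihx]
  rw [← key w, ← key w', heq]
end

section
/- Let (W,S) be an even Coxeter system, t ∈ S, and let w, w' ∈ W be two 'even' vertices (the number of t's in their expressions is even) lying in a common spherical coset vW_V (i.e. w^{-1}w' ∈ W_V for some spherical V). If c(w) ≠ c(w') (they have different colors), then {s,t} ⊆ S(w^{-1}w') for some s with 2 < m_{st} < ∞, and w^{-1}w' contains at least two (and an even number of) t's in any expression. -/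
open CoxeterSystem

/-!
In an even Coxeter system, killing the generators outside a set `T` is a homomorphism
`W → W_T`, and on `W_U` the colouring map `g_{UT}` is this retraction. If `c(w) ≠ c(w')`, then
for some `T ∋ t` the retraction of `v = w⁻¹w'` is not in `W_{T∖{t}}`, so every word for `v`
contains `t`; the parity homomorphism makes the number of `t`'s even. If every letter of a
reduced word for `v` commuted with `t`, the `t`'s could be gathered in front and cancelled,
leaving a word for `v` without `t`. So some letter `s` of it has `m_{st} ≠ 2`; as `s ∈ U` and
`m_{st}` is even, `2 < m_{st} < ∞`.
-/

theorem CoxeterMatrix.IsEven.even_s12 {B : Type*} {M : CoxeterMatrix B} (heven : M.IsEven)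
    {i j : B} (hij : i ≠ j) : Even (M i j) :=
  (heven i j hij).elim (fun h => h ▸ ⟨0, rfl⟩) id

namespace CoxeterSystem

variable {B W : Type*} [Group W] {M : CoxeterMatrix B} (cs : CoxeterSystem M W)

local prefix:100 "s" => cs.simple
local prefix:100 "π" => cs.wordProd

theorem simple_pow_of_even (i : B) {n : ℕ} (hn : Even n) : s i ^ n = 1 := by
  obtain ⟨k, rfl⟩ := hn
  rw [← two_mul, pow_mul, simple_sq, one_pow]

theorem commute_simple_of_eq_two {i j : B} (h : M i j = 2) : Commute (s i) (s j) := by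
  have hsq : (s i * s j) * (s i * s j) = 1 := by
    rw [← pow_two, ← h]
    exact cs.simple_mul_simple_pow i j
  calc s i * s j = (s i * s j)⁻¹ := eq_inv_of_mul_eq_one_left hsq
    _ = s j * s i := by rw [mul_inv_rev, inv_simple, inv_simple]

theorem simple_mem_parabolic {X : Set B} {i : B} (hi : i ∈ X) : s i ∈ cs.parabolic X :=
  Subgroup.subset_closure (Set.mem_image_of_mem _ hi)

theorem wordProd_mem_parabolic {X : Set B} {ω : List B} (h : ∀ i ∈ ω, i ∈ X) :
    π ω ∈ cs.parabolic X :=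
  (cs.parabolic X).list_prod_mem <|
    List.forall_mem_map.mpr fun i hi => cs.simple_mem_parabolic (h i hi)

/-- Killing the generators outside `X` respects the Coxeter relations because every `m_{ij}`
with `i ∈ X` and `j ∉ X` is even. -/
noncomputable def retraction (heven : M.IsEven) (X : Set B) : W →* W :=
  open Classical in
  cs.lift ⟨fun i => if i ∈ X then s i else 1, fun i j => by
    by_cases hi : i ∈ X <;> by_cases hj : j ∈ X <;> simp only [hi, hj, if_true, if_false]
    · exact cs.simple_mul_simple_pow i j
    · rw [mul_one]
      exact cs.simple_pow_of_even i (heven.even_s12 fun h => hj (h ▸ hi))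
    · rw [one_mul, M.symmetric]
      exact cs.simple_pow_of_even j (heven.even_s12 fun h => hi (h ▸ hj))
    · simp⟩

variable {cs} (heven : M.IsEven)

theorem retraction_simple_of_mem {X : Set B} {i : B} (hi : i ∈ X) :
    cs.retraction heven X (s i) = s i :=
  (cs.lift_apply_simple _ i).trans (if_pos hi)

theorem retraction_simple_of_notMem {X : Set B} {i : B} (hi : i ∉ X) :
    cs.retraction heven X (s i) = 1 :=
  (cs.lift_apply_simple _ i).trans (if_neg hi)

theorem retraction_eq_self_of_mem_parabolic {X : Set B} {x : W} (hx : x ∈ cs.parabolic X) :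
    cs.retraction heven X x = x := by
  refine MonoidHom.eqOn_closure (g := MonoidHom.id W) ?_ hx
  rintro _ ⟨i, hi, rfl⟩
  exact retraction_simple_of_mem heven hi

theorem retraction_mem_parabolic_inter {X Y : Set B} {x : W} (hx : x ∈ cs.parabolic Y) :
    cs.retraction heven X x ∈ cs.parabolic (X ∩ Y) := by
  refine (Subgroup.closure_le ((cs.parabolic (X ∩ Y)).comap _)).mpr ?_ hx
  rintro _ ⟨i, hi, rfl⟩
  by_cases hiX : i ∈ X
  · rw [SetLike.mem_coe, Subgroup.mem_comap, retraction_simple_of_mem heven hiX]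
    exact cs.simple_mem_parabolic ⟨hiX, hi⟩
  · rw [SetLike.mem_coe, Subgroup.mem_comap, retraction_simple_of_notMem heven hiX]
    exact one_mem _

theorem retraction_wordProd (X : Set B) [DecidablePred (· ∈ X)] (ω : List B) :
    cs.retraction heven X (π ω) = π (ω.filter (· ∈ X)) := by
  induction ω with
  | nil => simp
  | cons i ω ih =>
    rw [wordProd_cons, map_mul, ih, List.filter_cons]
    by_cases hi : i ∈ X
    · simp [hi, retraction_simple_of_mem, wordProd_cons]
    · simp [hi, retraction_simple_of_notMem]

theorem IsReduced.mem_of_wordProd_mem_parabolic (heven : M.IsEven) {X : Set B} {ω : List B}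
    (hred : cs.IsReduced ω) (hω : π ω ∈ cs.parabolic X) {i : B} (hi : i ∈ ω) : i ∈ X := by
  classical
  by_contra hiX
  have hfilter : π (ω.filter (· ∈ X)) = π ω := by
    rw [← retraction_wordProd heven, retraction_eq_self_of_mem_parabolic heven hω]
  have hshorter : (ω.filter (· ∈ X)).length < ω.length :=
    lt_of_le_of_ne (List.length_filter_le _ _) fun h =>
      hiX (by simpa using List.length_filter_eq_length_iff.mp h i hi)
  have := cs.length_wordProd_le (ω.filter (· ∈ X))
  rw [hfilter, hred.eq] at this
  omega

theorem mem_of_retraction_wordProd_notMem {T : Set B} {t : B} {ω : List B}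
    (h : cs.retraction heven T (π ω) ∉ cs.parabolic (T \ {t})) : t ∈ ω := by
  by_contra ht
  exact h (retraction_mem_parabolic_inter heven
    (cs.wordProd_mem_parabolic (X := {t}ᶜ) fun i hi hit => ht (hit ▸ hi)))

theorem map_wordProd_eq_ofAdd_count [DecidableEq B] {t : B} {φ : W →* Multiplicative (ZMod 2)}
    (hφ : ∀ i : B, φ (s i) = if i = t then Multiplicative.ofAdd (1 : ZMod 2) else 1)
    (ω : List B) : φ (π ω) = Multiplicative.ofAdd (ω.count t : ZMod 2) := by
  induction ω with
  | nil => simp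
  | cons i ω ih =>
    rw [wordProd_cons, map_mul, hφ, ih, List.count_cons]
    by_cases hi : i = t
    · simp [hi, ofAdd_add, mul_comm]
    · simp [hi]

theorem even_count_of_map_wordProd_eq_one [DecidableEq B] {t : B}
    {φ : W →* Multiplicative (ZMod 2)}
    (hφ : ∀ i : B, φ (s i) = if i = t then Multiplicative.ofAdd (1 : ZMod 2) else 1)
    {ω : List B} (h : φ (π ω) = 1) : Even (ω.count t) := by
  rw [map_wordProd_eq_ofAdd_count hφ, ofAdd_eq_one] at h
  exact ZMod.natCast_eq_zero_iff_even.mp h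

theorem wordProd_eq_simple_pow_count_mul_filter [DecidableEq B] (t : B) {ω : List B}
    (h : ∀ i ∈ ω, Commute (s i) (s t)) :
    π ω = s t ^ ω.count t * π (ω.filter (· ≠ t)) := by
  induction ω with
  | nil => simp
  | cons i ω ih =>
    rw [wordProd_cons, ih fun j hj => h j (List.mem_cons_of_mem _ hj), List.count_cons,
      List.filter_cons]
    by_cases hi : i = t
    · subst hi
      simp [pow_succ', mul_assoc]
    · have hcomm := (h i List.mem_cons_self).pow_right (ω.count t)
      simp only [hi, beq_iff_eq, if_false, add_zero, ne_eq, not_false_eq_true, decide_true,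
        if_true, wordProd_cons, ← mul_assoc, hcomm.eq]

theorem exists_mem_not_commute_of_forall_mem [DecidableEq B] {t : B} {ω : List B}
    (ht : ∀ ω' : List B, π ω' = π ω → t ∈ ω') (hcount : Even (ω.count t)) :
    ∃ i ∈ ω, ¬ Commute (s i) (s t) := by
  by_contra! hcomm
  have hfilter : π (ω.filter (· ≠ t)) = π ω := by
    rw [wordProd_eq_simple_pow_count_mul_filter t hcomm, cs.simple_pow_of_even t hcount,
      one_mul]
  simpa using List.mem_filter.mp (ht _ hfilter)

theorem two_lt_of_not_commute (heven : M.IsEven) {i j : B} (hij : M i j ≠ 0)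
    (hcomm : ¬ Commute (s i) (s j)) : 2 < M i j := by
  have hne : i ≠ j := by
    rintro rfl
    exact hcomm (Commute.refl _)
  have htwo : M i j ≠ 2 := fun h => hcomm (cs.commute_simple_of_eq_two h)
  obtain ⟨k, hk⟩ := heven.even_s12 hne
  omega

end CoxeterSystem

theorem IsColoringFamily.apply_eq_retraction {B W : Type*} [Group W] {M : CoxeterMatrix B}
    {cs : CoxeterSystem M W} (heven : M.IsEven) {U : Set B}
    {g : Set B → (cs.parabolic U →* W)} (hg : IsColoringFamily cs U g) (T : Set B)
    (x : cs.parabolic U) : g T x = cs.retraction heven T x := by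
  obtain ⟨x, hx⟩ := x
  change x ∈ Subgroup.closure _ at hx
  induction hx using Subgroup.closure_induction with
  | mem _ hy =>
    obtain ⟨i, hi, rfl⟩ := hy
    by_cases hiT : i ∈ T
    · rw [(hg T).2.1 i hi hiT, retraction_simple_of_mem heven hiT]
    · rw [(hg T).2.2 i hi hiT, retraction_simple_of_notMem heven hiT]
  | one => exact (map_one _).trans (map_one _).symm
  | mul x y hx hy ihx ihy =>
    change g T (⟨x, hx⟩ * ⟨y, hy⟩) = _
    rw [map_mul, ihx, ihy, map_mul]
  | inv x hx ihx =>
    change g T (⟨x, hx⟩⁻¹) = _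
    rw [map_inv, ihx, map_inv]

theorem statement12_general {B W : Type*} [Group W] [DecidableEq B] {M : CoxeterMatrix B}
    (cs : CoxeterSystem M W) (heven : M.IsEven) (t : B)
    (φ : W →* Multiplicative (ZMod 2))
    (hφ : ∀ i : B, φ (cs.simple i) =
      if i = t then Multiplicative.ofAdd (1 : ZMod 2) else 1)
    (g : Set B → ((cs.parabolic {s | M s t ≠ 0}) →* W))
    (hg : IsColoringFamily cs {s | M s t ≠ 0} g)
    (w w' : cs.parabolic {s | M s t ≠ 0})
    (hweven : φ (w : W) = 1) (hw'even : φ (w' : W) = 1)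
    (hdiff : ¬ SameColor cs t {s | M s t ≠ 0} g w w') :
    ∃ s : B, 2 < M s t ∧
      s ∈ cs.lettersOf ((w : W)⁻¹ * (w' : W)) ∧
      t ∈ cs.lettersOf ((w : W)⁻¹ * (w' : W)) ∧
      ∀ ω : List B, cs.wordProd ω = (w : W)⁻¹ * (w' : W) →
        2 ≤ ω.count t ∧ Even (ω.count t) := by
  obtain ⟨T, -, -, hT⟩ : ∃ T, cs.IsSpherical T ∧ t ∈ T ∧
      (g T w)⁻¹ * g T w' ∉ cs.parabolic (T \ {t}) := by
    simpa [SameColor, QuotientGroup.eq] using hdiff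
  have hretr : cs.retraction heven T ((w : W)⁻¹ * w') ∉ cs.parabolic (T \ {t}) := by
    rwa [← Subgroup.coe_inv, ← Subgroup.coe_mul, ← hg.apply_eq_retraction heven, map_mul,
      map_inv]
  have ht (ω : List B) (hω : cs.wordProd ω = (w : W)⁻¹ * w') : t ∈ ω :=
    mem_of_retraction_wordProd_notMem heven (hω ▸ hretr)
  have hcount (ω : List B) (hω : cs.wordProd ω = (w : W)⁻¹ * w') : Even (ω.count t) :=
    even_count_of_map_wordProd_eq_one hφ <| by
      rw [hω, map_mul, map_inv, hweven, hw'even, inv_one, one_mul]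
  obtain ⟨ω₀, hred, hω₀⟩ := cs.exists_isReduced ((w : W)⁻¹ * w')
  obtain ⟨s, hs, hnc⟩ := exists_mem_not_commute_of_forall_mem
    (fun ω hω => ht ω (hω.trans hω₀.symm)) (hcount ω₀ hω₀.symm)
  have hsU : M s t ≠ 0 :=
    hred.mem_of_wordProd_mem_parabolic heven (hω₀ ▸ mul_mem (inv_mem w.2) w'.2) hs
  refine ⟨s, cs.two_lt_of_not_commute heven hsU hnc, ⟨ω₀, hred, hω₀.symm, hs⟩,
    ⟨ω₀, hred, hω₀.symm, ht ω₀ hω₀.symm⟩, fun ω hω => ⟨?_, hcount ω hω⟩⟩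
  obtain ⟨k, hk⟩ := hcount ω hω
  have := List.count_pos_iff.mpr (ht ω hω)
  omega

/-- two differently colored even vertices `w, w'` of a common
spherical coset satisfy: `{s,t} ⊆ S(w⁻¹w')` for some `s` with `2 < m_{st} < ∞`,
and `w⁻¹w'` contains at least two, and an even number of, `t`'s in any
expression. -/
theorem statement12 {B W : Type*} [Group W] [DecidableEq B] {M : CoxeterMatrix B}
    (cs : CoxeterSystem M W) (heven : M.IsEven) (hflag : cs.HasFlagNerve) (t : B)
    (φ : W →* Multiplicative (ZMod 2))
    (hφ : ∀ i : B, φ (cs.simple i) =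
      if i = t then Multiplicative.ofAdd (1 : ZMod 2) else 1)
    (g : Set B → ((cs.parabolic {s | M s t ≠ 0}) →* W))
    (hg : IsColoringFamily cs {s | M s t ≠ 0} g)
    (w w' : cs.parabolic {s | M s t ≠ 0})
    (hweven : φ (w : W) = 1) (hw'even : φ (w' : W) = 1)
    (V : Set B) (hV : cs.IsSpherical V)
    (hmem : (w : W)⁻¹ * (w' : W) ∈ cs.parabolic V)
    (hdiff : ¬ SameColor cs t {s | M s t ≠ 0} g w w') :
    ∃ s : B, 2 < M s t ∧
      s ∈ cs.lettersOf ((w : W)⁻¹ * (w' : W)) ∧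
      t ∈ cs.lettersOf ((w : W)⁻¹ * (w' : W)) ∧
      ∀ ω : List B, cs.wordProd ω = (w : W)⁻¹ * (w' : W) →
        2 ≤ ω.count t ∧ Even (ω.count t) :=
  statement12_general cs heven t φ hφ g hg w w' hweven hw'even hdiff
end
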